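/- On ℝ⁶ with canonical coordinates (r¹,r²,r³,π₁,π₂,π₃) and canonical Poisson bracket, define H = π₁π₃ + ½π₂² − r³ + (3/2) r¹r² − ½ (r¹)³, I = ½ π₃² − r¹, and K = π₂π₃ − r² + (3/4)(r¹)². Then {H, I} = 0, {H, K} = 0, and {I, K} = 0; i.e., the quadratic-in-momenta function K is an integral of motion of the three-dimensional cubic-potential Benenti Hamiltonian H commuting with the additional integral I. -/
import Mathlib


open Finset

noncomputable section

/-- Canonical Poisson bracket on `ℝ⁶ = (Fin 3 → ℝ) × (Fin 3 → ℝ)`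
(coordinates `(r¹,r²,r³,π₁,π₂,π₃)`). -/
def pbr (f g : (Fin 3 → ℝ) × (Fin 3 → ℝ) → ℝ)
    (x : (Fin 3 → ℝ) × (Fin 3 → ℝ)) : ℝ :=
  ∑ j : Fin 3,
    (fderiv ℝ f x (Pi.single j 1, 0) * fderiv ℝ g x (0, Pi.single j 1) -
      fderiv ℝ g x (Pi.single j 1, 0) * fderiv ℝ f x (0, Pi.single j 1))

/-- The three-dimensional cubic-potential Benenti Hamiltonian
`H = π₁π₃ + ½π₂² − r³ + (3/2)r¹r² − ½(r¹)³`. -/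
def Hcub (x : (Fin 3 → ℝ) × (Fin 3 → ℝ)) : ℝ :=
  x.2 0 * x.2 2 + (1/2) * x.2 1 ^ 2 - x.1 2 + (3/2) * x.1 0 * x.1 1 - (1/2) * x.1 0 ^ 3

/-- The additional integral `I = ½π₃² − r¹`. -/
def Icub (x : (Fin 3 → ℝ) × (Fin 3 → ℝ)) : ℝ :=
  (1/2) * x.2 2 ^ 2 - x.1 0

/-- The quadratic-in-momenta integral `K = π₂π₃ − r² + (3/4)(r¹)²`. -/
def Kcub (x : (Fin 3 → ℝ) × (Fin 3 → ℝ)) : ℝ :=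
  x.2 1 * x.2 2 - x.1 1 + (3/4) * x.1 0 ^ 2

/- Auxiliary material for the proof. -/

local notation "E" => ((Fin 3 → ℝ) × (Fin 3 → ℝ))

/-- Position coordinate as a continuous linear map. -/
def qc (i : Fin 3) : E →L[ℝ] ℝ :=
  (ContinuousLinearMap.proj i).comp (ContinuousLinearMap.fst ℝ (Fin 3 → ℝ) (Fin 3 → ℝ))

/-- Momentum coordinate as a continuous linear map. -/
def pc (i : Fin 3) : E →L[ℝ] ℝ :=
  (ContinuousLinearMap.proj i).comp (ContinuousLinearMap.snd ℝ (Fin 3 → ℝ) (Fin 3 → ℝ))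

lemma hasQ (i : Fin 3) (x : E) : HasFDerivAt (fun x : E => x.1 i) (qc i) x :=
  (qc i).hasFDerivAt

lemma hasP (i : Fin 3) (x : E) : HasFDerivAt (fun x : E => x.2 i) (pc i) x :=
  (pc i).hasFDerivAt

lemma hasH (x : E) : HasFDerivAt Hcub
    (x.2 0 • pc 2 + x.2 2 • pc 0 + (1/2 : ℝ) • (x.2 1 • pc 1 + x.2 1 • pc 1) - qc 2 +
      (((3/2) * x.1 0) • qc 1 + x.1 1 • ((3/2 : ℝ) • qc 0)) -
      (1/2 : ℝ) • (x.1 0 • (x.1 0 • qc 0 + x.1 0 • qc 0) + (x.1 0 * x.1 0) • qc 0)) x := by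
  have hfun : Hcub = fun x : E => x.2 0 * x.2 2 + (1/2) * (x.2 1 * x.2 1) - x.1 2 +
      (3/2) * x.1 0 * x.1 1 - (1/2) * (x.1 0 * (x.1 0 * x.1 0)) := by
    funext x; simp [Hcub]; ring
  rw [hfun]
  exact (((((hasP 0 x).mul (hasP 2 x)).add (((hasP 1 x).mul (hasP 1 x)).const_mul (1/2))).sub
    (hasQ 2 x)).add (((hasQ 0 x).const_mul (3/2)).mul (hasQ 1 x))).sub
    (((hasQ 0 x).mul ((hasQ 0 x).mul (hasQ 0 x))).const_mul (1/2))

lemma hasI (x : E) : HasFDerivAt Icub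
    ((1/2 : ℝ) • (x.2 2 • pc 2 + x.2 2 • pc 2) - qc 0) x := by
  have hfun : Icub = fun x : E => (1/2) * (x.2 2 * x.2 2) - x.1 0 := by
    funext x; simp [Icub]; ring
  rw [hfun]
  exact (((hasP 2 x).mul (hasP 2 x)).const_mul (1/2)).sub (hasQ 0 x)

lemma hasK (x : E) : HasFDerivAt Kcub
    (x.2 1 • pc 2 + x.2 2 • pc 1 - qc 1 + (3/4 : ℝ) • (x.1 0 • qc 0 + x.1 0 • qc 0)) x := by
  have hfun : Kcub = fun x : E => x.2 1 * x.2 2 - x.1 1 + (3/4) * (x.1 0 * x.1 0) := by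
    funext x; simp [Kcub]; ring
  rw [hfun]
  exact (((hasP 1 x).mul (hasP 2 x)).sub (hasQ 1 x)).add
    (((hasQ 0 x).mul (hasQ 0 x)).const_mul (3/4))

/-- `{H, I} = 0`, `{H, K} = 0` and `{I, K} = 0` on all of `ℝ⁶`: the
quadratic-in-momenta function `K` is an integral of the three-dimensional
cubic-potential Benenti Hamiltonian commuting with the additional integral `I`. -/
theorem cubic_Benenti_n3_commuting_integrals :
    ∀ x : (Fin 3 → ℝ) × (Fin 3 → ℝ),
      pbr Hcub Icub x = 0 ∧ pbr Hcub Kcub x = 0 ∧ pbr Icub Kcub x = 0 := by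
  intro x
  refine ⟨?_, ?_, ?_⟩ <;>
  · simp only [pbr, (hasH x).fderiv, (hasI x).fderiv, (hasK x).fderiv, Fin.sum_univ_three,
      ContinuousLinearMap.add_apply, ContinuousLinearMap.sub_apply,
      ContinuousLinearMap.smul_apply, qc, pc, ContinuousLinearMap.comp_apply,
      ContinuousLinearMap.coe_fst', ContinuousLinearMap.coe_snd',
      ContinuousLinearMap.proj_apply, smul_eq_mul, Pi.single_apply, Pi.zero_apply]
    simp only [reduceIte, Fin.reduceEq]
    ring
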